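/- The family of behaviors of deterministic splitters is not closed under complementation: over the alphabet A = {a,b} (a ≠ b), the set L = {(b, aⁿ, baⁿ) : n ∈ ℕ} ⊆ U is the behavior of a deterministic splitter with finitely many states, but its complement U \ L is not the behavior of any deterministic splitter. -/

import Mathlib

/-- Words over the alphabet `A`, i.e. elements of the free monoid `A*`. -/
abbrev Word (A : Type) := List A

/-- The generating set `G = {(a,ε,a) : a ∈ A} ∪ {(ε,a,a) : a ∈ A}` of the
Shuffling Monoid. -/
def genG (A : Type) : Set (Word A × Word A × Word A) :=
  {g | ∃ a : A, g = ([a], [], [a]) ∨ g = ([], [a], [a])}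

/-- Componentwise product (concatenation) of a list of triples of words. -/
def prodTriple {A : Type} (ls : List (Word A × Word A × Word A)) :
    Word A × Word A × Word A :=
  ((ls.map fun l => l.1).flatten, (ls.map fun l => l.2.1).flatten,
    (ls.map fun l => l.2.2).flatten)

/-- The Shuffling Monoid `U`: the submonoid of `A* × A* × A*` generated by `G`,
described as the set of all products of finite sequences of generators. -/
def shuffleU (A : Type) : Set (Word A × Word A × Word A) :=
  {m | ∃ ls : List (Word A × Word A × Word A), (∀ l ∈ ls, l ∈ genG A) ∧ prodTriple ls = m}

/-- A spliffer (equivalently, splitter) over `A`: a finite automaton whose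
transitions are labeled by elements of `G`. -/
structure Spliffer (A : Type) where
  Q : Type
  finQ : Finite Q
  E : Q → (Word A × Word A × Word A) → Q → Prop
  I : Set Q
  T : Set Q
  labels_mem : ∀ {q l q'}, E q l q' → l ∈ genG A

/-- Paths in a spliffer, recording the sequence of labels. -/
inductive Spliffer.Path {A : Type} (S : Spliffer A) :
    S.Q → List (Word A × Word A × Word A) → S.Q → Prop
  | nil (q : S.Q) : Spliffer.Path S q [] q
  | cons {q q' q'' : S.Q} {l : Word A × Word A × Word A}
      {ls : List (Word A × Word A × Word A)} :
      S.E q l q' → Spliffer.Path S q' ls q'' → Spliffer.Path S q (l :: ls) q''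

/-- The behavior `|S|` of a spliffer: products of the label sequences of all
successful runs. -/
def Spliffer.behavior {A : Type} (S : Spliffer A) : Set (Word A × Word A × Word A) :=
  {m | ∃ q ∈ S.I, ∃ q' ∈ S.T, ∃ ls, S.Path q ls q' ∧ prodTriple ls = m}

/-- A splitter is deterministic if it has a single initial state, for every state
and input letter there is at most one outgoing transition reading that letter,
and all transitions leaving a given state write to the same tape. -/
def Spliffer.Deterministic {A : Type} (S : Spliffer A) : Prop :=
  (∃! i, i ∈ S.I) ∧
  (∀ ⦃q l₁ q₁ l₂ q₂⦄, S.E q l₁ q₁ → S.E q l₂ q₂ → l₁.2.2 = l₂.2.2 → l₁ = l₂ ∧ q₁ = q₂) ∧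
  (∀ ⦃q l₁ q₁ l₂ q₂⦄, S.E q l₁ q₁ → S.E q l₂ q₂ →
    (l₁.1 = [] ∧ l₂.1 = []) ∨ (l₁.2.1 = [] ∧ l₂.2.1 = []))

/-- The set `L = {(b, aⁿ, baⁿ) : n ∈ ℕ}`. -/
def setLb {A : Type} (a b : A) : Set (Word A × Word A × Word A) :=
  {x | ∃ n : ℕ, x = ([b], List.replicate n a, b :: List.replicate n a)}

/-!
A deterministic splitter reads the third tape letter by letter, and at each state the letter read
fixes the transition taken. Hence the successful run, and with it the whole triple it produces, is
determined by the third component: the behavior of a deterministic splitter is a partial function of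
its third coordinate. The complement `U \ L` is not, since it contains both `(ba, ε, ba)` and
`(ε, ba, ba)`. The set `L` itself is recognised by a two-state splitter that writes `b` on the first
tape and then loops writing `a` on the second.
-/

variable {A : Type}

lemma length_thd_eq_one_of_mem_genG {l : Word A × Word A × Word A} (hl : l ∈ genG A) :
    l.2.2.length = 1 := by
  obtain ⟨x, rfl | rfl⟩ := hl <;> rfl

@[simp]
lemma prodTriple_nil : prodTriple ([] : List (Word A × Word A × Word A)) = ([], [], []) := rfl

@[simp]
lemma prodTriple_cons (l : Word A × Word A × Word A) (ls : List (Word A × Word A × Word A)) :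
    prodTriple (l :: ls) =
      (l.1 ++ (prodTriple ls).1, l.2.1 ++ (prodTriple ls).2.1, l.2.2 ++ (prodTriple ls).2.2) :=
  rfl

lemma left_mem_shuffleU (w : Word A) : (w, [], w) ∈ shuffleU A :=
  ⟨w.map fun x => ([x], [], [x]), by simp [genG],
    by simp [prodTriple, Function.comp_def, ← List.flatMap_def]⟩

lemma right_mem_shuffleU (w : Word A) : ([], w, w) ∈ shuffleU A :=
  ⟨w.map fun x => ([], [x], [x]), by simp [genG],
    by simp [prodTriple, Function.comp_def, ← List.flatMap_def]⟩

namespace Spliffer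

variable {S : Spliffer A}

lemma Path.length_thd_prodTriple {q q' : S.Q} {ls : List (Word A × Word A × Word A)}
    (h : S.Path q ls q') : (prodTriple ls).2.2.length = ls.length := by
  induction h with
  | nil => rfl
  | cons hE _ ih => simp [length_thd_eq_one_of_mem_genG (S.labels_mem hE), ih, add_comm]

lemma Deterministic.path_eq_of_thd_eq (hd : S.Deterministic) {q q₁ q₂ : S.Q}
    {ls₁ ls₂ : List (Word A × Word A × Word A)} (h₁ : S.Path q ls₁ q₁) (h₂ : S.Path q ls₂ q₂)
    (hw : (prodTriple ls₁).2.2 = (prodTriple ls₂).2.2) : ls₁ = ls₂ := by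
  induction h₁ generalizing ls₂ with
  | nil =>
    have hlen := h₂.length_thd_prodTriple
    rw [← hw] at hlen
    exact List.eq_nil_of_length_eq_zero hlen.symm |>.symm
  | cons hE₁ hP₁ ih =>
    cases h₂ with
    | nil =>
      have hlen := (Path.cons hE₁ hP₁).length_thd_prodTriple
      rw [hw] at hlen
      simp at hlen
    | cons hE₂ hP₂ =>
      have hhead := List.append_inj hw <| by
        rw [length_thd_eq_one_of_mem_genG (S.labels_mem hE₁),
          length_thd_eq_one_of_mem_genG (S.labels_mem hE₂)]
      obtain ⟨rfl, rfl⟩ := hd.2.1 hE₁ hE₂ hhead.1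
      rw [ih hP₂ hhead.2]

lemma Deterministic.eq_of_mem_behavior_of_thd_eq (hd : S.Deterministic)
    {m₁ m₂ : Word A × Word A × Word A} (h₁ : m₁ ∈ S.behavior) (h₂ : m₂ ∈ S.behavior)
    (hw : m₁.2.2 = m₂.2.2) : m₁ = m₂ := by
  obtain ⟨i₁, hi₁, _, -, ls₁, hP₁, rfl⟩ := h₁
  obtain ⟨i₂, hi₂, _, -, ls₂, hP₂, rfl⟩ := h₂
  obtain rfl : i₁ = i₂ := hd.1.unique hi₁ hi₂
  rw [hd.path_eq_of_thd_eq hP₁ hP₂ hw]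

end Spliffer

def splitterLb (a b : A) : Spliffer A where
  Q := Bool
  finQ := inferInstance
  E q l q' := q' = true ∧ l = if q then ([], [a], [a]) else ([b], [], [b])
  I := {false}
  T := {true}
  labels_mem := by
    rintro (_ | _) l q' ⟨-, rfl⟩
    exacts [⟨b, Or.inl rfl⟩, ⟨a, Or.inr rfl⟩]

lemma splitterLb_deterministic (a b : A) : (splitterLb a b).Deterministic := by
  refine ⟨⟨false, rfl, fun _ h => h⟩, ?_, ?_⟩
  · rintro q l₁ q₁ l₂ q₂ ⟨rfl, rfl⟩ ⟨rfl, rfl⟩ -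
    exact ⟨rfl, rfl⟩
  · rintro (_ | _) l₁ q₁ l₂ q₂ ⟨-, rfl⟩ ⟨-, rfl⟩
    exacts [Or.inr ⟨rfl, rfl⟩, Or.inl ⟨rfl, rfl⟩]

lemma splitterLb_path_from_true (a b : A) {q q' : (splitterLb a b).Q}
    {ls : List (Word A × Word A × Word A)} (h : (splitterLb a b).Path q ls q') (hq : q = true) : ∀ l ∈ ls, l = ([], [a], [a]) := by
  induction h with
  | nil => simp
  | cons hE _ ih =>
    obtain ⟨rfl, rfl⟩ := hE
    simpa [hq] using ih rfl

lemma prodTriple_replicate_right (a : A) (n : ℕ) :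
    prodTriple (List.replicate n (([], [a], [a]) : Word A × Word A × Word A)) =
      ([], List.replicate n a, List.replicate n a) := by
  simp [prodTriple, List.map_replicate]

lemma splitterLb_path_replicate (a b : A) (n : ℕ) :
    (splitterLb a b).Path true (List.replicate n ([], [a], [a])) true := by
  induction n with
  | zero => exact .nil _
  | succ n ih => exact .cons ⟨rfl, rfl⟩ ih

lemma splitterLb_behavior (a b : A) : (splitterLb a b).behavior = setLb a b := by
  ext m
  constructor
  · rintro ⟨q, hq, q', hq', ls, hP, rfl⟩
    cases hP with
    | nil => exact absurd (hq.symm.trans hq') Bool.false_ne_true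
    | @cons _ _ _ _ ls hE hP =>
      obtain ⟨rfl, rfl⟩ := hE
      obtain rfl : q = false := hq
      refine ⟨ls.length, ?_⟩
      rw [List.eq_replicate_iff.2 ⟨rfl, splitterLb_path_from_true a b hP rfl⟩]
      simp [prodTriple_replicate_right]
  · rintro ⟨n, rfl⟩
    refine ⟨false, rfl, true, rfl, _, .cons ⟨rfl, rfl⟩ (splitterLb_path_replicate a b n), ?_⟩
    simp [prodTriple_replicate_right]

theorem drat_not_closed_under_complement_general {A : Type} (a b : A) :
    (∃ S : Spliffer A, S.Deterministic ∧ S.behavior = setLb a b) ∧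
    ¬ ∃ S : Spliffer A, S.Deterministic ∧ S.behavior = shuffleU A \ setLb a b := by
  refine ⟨⟨splitterLb a b, splitterLb_deterministic a b, splitterLb_behavior a b⟩, ?_⟩
  rintro ⟨S, hd, hS⟩
  have hleft : ([b, a], [], [b, a]) ∈ S.behavior := hS ▸ ⟨left_mem_shuffleU _, by simp [setLb]⟩
  have hright : ([], [b, a], [b, a]) ∈ S.behavior := hS ▸ ⟨right_mem_shuffleU _, by simp [setLb]⟩
  simpa using hd.eq_of_mem_behavior_of_thd_eq hleft hright rfl

/-- over `A = {a,b}`, the set `L = {(b, aⁿ, baⁿ) : n ∈ ℕ}` is the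
behavior of a deterministic splitter, but its complement `U \ L` is not the
behavior of any deterministic splitter. -/
theorem drat_not_closed_under_complement {A : Type} (a b : A) (hab : a ≠ b)
    (hA : ∀ x : A, x = a ∨ x = b) :
    (∃ S : Spliffer A, S.Deterministic ∧ S.behavior = setLb a b) ∧
    ¬ ∃ S : Spliffer A, S.Deterministic ∧ S.behavior = shuffleU A \ setLb a b :=
  drat_not_closed_under_complement_general a b
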